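/- arXiv:2503.10932 — 2 statements merged into one kernel-verified Lean document; each statement's English description precedes it below -/
import Mathlib

section
/- Let N₁, N₂ be nonnegative integers and let δ₂ be a symmetric treatment rule (δ₂(n₁,n₂) + δ₂(N₁-n₁, N₂-n₂) = 1 for all valid n₁,n₂). If the mean vector (μ₁,μ₂) ∈ [0,1]² maximizes the regret function R(δ,·) over [0,1]², then (1-μ₁, 1-μ₂) also maximizes R(δ,·). -/
/-!
The map `μ ↦ 1 - μ` swaps successes and failures: it sends the binomial weight of `n` successes
(a Bernstein polynomial) to that of `N - n` successes. Reflecting both sums in `E` and applying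
the symmetry of `δ₂` turns `E(1 - μ₁, 1 - μ₂)` into `1 - E(μ₁, μ₂)`, and with this the regret is
invariant under `(μ₁, μ₂) ↦ (1 - μ₁, 1 - μ₂)`. A maximizer is therefore mapped to a point of the
same regret.
-/

/-- Expected probability of assigning treatment 2 under rule `δ₂`. -/
noncomputable def expDelta (N₁ N₂ : ℕ) (δ₂ : ℕ → ℕ → ℝ) (μ₁ μ₂ : ℝ) : ℝ :=
  ∑ n₁ ∈ Finset.range (N₁ + 1), ∑ n₂ ∈ Finset.range (N₂ + 1),
    δ₂ n₁ n₂ * (N₁.choose n₁ : ℝ) * μ₁ ^ n₁ * (1 - μ₁) ^ (N₁ - n₁) *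
      (N₂.choose n₂ : ℝ) * μ₂ ^ n₂ * (1 - μ₂) ^ (N₂ - n₂)

/-- Regret of the rule `δ₂` at the mean vector `(μ₁, μ₂)`. -/
noncomputable def regret2 (N₁ N₂ : ℕ) (δ₂ : ℕ → ℕ → ℝ) (μ₁ μ₂ : ℝ) : ℝ :=
  max μ₁ μ₂ - μ₁ * (1 - expDelta N₁ N₂ δ₂ μ₁ μ₂) - μ₂ * expDelta N₁ N₂ δ₂ μ₁ μ₂

open Finset Polynomial

lemma bernsteinPolynomial.eval_one_sub_sub {R : Type*} [CommRing R] {N n : ℕ} (h : n ≤ N)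
    (x : R) :
    (bernsteinPolynomial R N (N - n)).eval (1 - x) = (bernsteinPolynomial R N n).eval x := by
  rw [bernsteinPolynomial.flip' R N n h, eval_comp]
  simp

lemma bernsteinPolynomial.sum_eval {R : Type*} [CommRing R] (N : ℕ) (x : R) :
    ∑ n ∈ range (N + 1), (bernsteinPolynomial R N n).eval x = 1 := by
  simpa [eval_finsetSum] using congrArg (eval x) (bernsteinPolynomial.sum R N)

lemma expDelta_eq_sum_bernsteinPolynomial (N₁ N₂ : ℕ) (δ₂ : ℕ → ℕ → ℝ) (μ₁ μ₂ : ℝ) :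
    expDelta N₁ N₂ δ₂ μ₁ μ₂ = ∑ n₁ ∈ range (N₁ + 1), ∑ n₂ ∈ range (N₂ + 1),
      δ₂ n₁ n₂ *
        ((bernsteinPolynomial ℝ N₁ n₁).eval μ₁ * (bernsteinPolynomial ℝ N₂ n₂).eval μ₂) := by
  simp only [expDelta, bernsteinPolynomial, eval_mul, eval_pow, eval_natCast, eval_sub, eval_one,
    eval_X]
  exact sum_congr rfl fun _ _ => sum_congr rfl fun _ _ => by ring

lemma expDelta_one_sub (N₁ N₂ : ℕ) (δ₂ : ℕ → ℕ → ℝ)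
    (hsym : ∀ n₁ ≤ N₁, ∀ n₂ ≤ N₂, δ₂ n₁ n₂ + δ₂ (N₁ - n₁) (N₂ - n₂) = 1) (μ₁ μ₂ : ℝ) :
    expDelta N₁ N₂ δ₂ (1 - μ₁) (1 - μ₂) = 1 - expDelta N₁ N₂ δ₂ μ₁ μ₂ := by
  set B₁ := fun n => (bernsteinPolynomial ℝ N₁ n).eval μ₁
  set B₂ := fun n => (bernsteinPolynomial ℝ N₂ n).eval μ₂
  have hreflect : expDelta N₁ N₂ δ₂ (1 - μ₁) (1 - μ₂) =
      ∑ n₁ ∈ range (N₁ + 1), ∑ n₂ ∈ range (N₂ + 1), (1 - δ₂ n₁ n₂) * (B₁ n₁ * B₂ n₂) := by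
    rw [expDelta_eq_sum_bernsteinPolynomial, ← sum_range_reflect]
    refine sum_congr rfl fun n₁ hn₁ => ?_
    rw [← sum_range_reflect]
    refine sum_congr rfl fun n₂ hn₂ => ?_
    have hn₁ : n₁ ≤ N₁ := Nat.lt_succ_iff.mp (mem_range.mp hn₁)
    have hn₂ : n₂ ≤ N₂ := Nat.lt_succ_iff.mp (mem_range.mp hn₂)
    simp only [add_tsub_cancel_right, bernsteinPolynomial.eval_one_sub_sub hn₁,
      bernsteinPolynomial.eval_one_sub_sub hn₂, B₁, B₂]
    rw [eq_sub_of_add_eq' (hsym n₁ hn₁ n₂ hn₂)]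
  rw [hreflect, expDelta_eq_sum_bernsteinPolynomial]
  simp only [sub_mul, one_mul, sum_sub_distrib, ← sum_mul_sum, B₁, B₂,
    bernsteinPolynomial.sum_eval]

lemma regret2_one_sub (N₁ N₂ : ℕ) (δ₂ : ℕ → ℕ → ℝ)
    (hsym : ∀ n₁ ≤ N₁, ∀ n₂ ≤ N₂, δ₂ n₁ n₂ + δ₂ (N₁ - n₁) (N₂ - n₂) = 1) (μ₁ μ₂ : ℝ) :
    regret2 N₁ N₂ δ₂ (1 - μ₁) (1 - μ₂) = regret2 N₁ N₂ δ₂ μ₁ μ₂ := by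
  have hmax : max (1 - μ₁) (1 - μ₂) = 1 - min μ₁ μ₂ := max_sub_sub_left 1 μ₁ μ₂
  have hminmax := min_add_max μ₁ μ₂
  rw [regret2, regret2, expDelta_one_sub N₁ N₂ δ₂ hsym, hmax]
  linarith

theorem stmt4_general (N₁ N₂ : ℕ) (δ₂ : ℕ → ℕ → ℝ)
    (hsym : ∀ n₁ ≤ N₁, ∀ n₂ ≤ N₂, δ₂ n₁ n₂ + δ₂ (N₁ - n₁) (N₂ - n₂) = 1)
    (μ₁ μ₂ : ℝ)
    (hmax : ∀ ν₁ ∈ Set.Icc (0:ℝ) 1, ∀ ν₂ ∈ Set.Icc (0:ℝ) 1,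
      regret2 N₁ N₂ δ₂ ν₁ ν₂ ≤ regret2 N₁ N₂ δ₂ μ₁ μ₂) :
    ∀ ν₁ ∈ Set.Icc (0:ℝ) 1, ∀ ν₂ ∈ Set.Icc (0:ℝ) 1,
      regret2 N₁ N₂ δ₂ ν₁ ν₂ ≤ regret2 N₁ N₂ δ₂ (1 - μ₁) (1 - μ₂) := by
  rw [regret2_one_sub N₁ N₂ δ₂ hsym]
  exact hmax

/-- for a symmetric rule, if `(μ₁,μ₂)` maximizes regret over `[0,1]²`,
then so does `(1-μ₁, 1-μ₂)`. -/
theorem stmt4 (N₁ N₂ : ℕ) (δ₂ : ℕ → ℕ → ℝ)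
    (hrange : ∀ n₁ ≤ N₁, ∀ n₂ ≤ N₂, δ₂ n₁ n₂ ∈ Set.Icc (0:ℝ) 1)
    (hsym : ∀ n₁ ≤ N₁, ∀ n₂ ≤ N₂, δ₂ n₁ n₂ + δ₂ (N₁ - n₁) (N₂ - n₂) = 1)
    (μ₁ μ₂ : ℝ) (h₁ : μ₁ ∈ Set.Icc (0:ℝ) 1) (h₂ : μ₂ ∈ Set.Icc (0:ℝ) 1)
    (hmax : ∀ ν₁ ∈ Set.Icc (0:ℝ) 1, ∀ ν₂ ∈ Set.Icc (0:ℝ) 1,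
      regret2 N₁ N₂ δ₂ ν₁ ν₂ ≤ regret2 N₁ N₂ δ₂ μ₁ μ₂) :
    ∀ ν₁ ∈ Set.Icc (0:ℝ) 1, ∀ ν₂ ∈ Set.Icc (0:ℝ) 1,
      regret2 N₁ N₂ δ₂ ν₁ ν₂ ≤ regret2 N₁ N₂ δ₂ (1 - μ₁) (1 - μ₂) :=
  stmt4_general N₁ N₂ δ₂ hsym μ₁ μ₂ hmax
end

section
/- If δ_ε is an ε-approximate minimax regret rule for the binary-outcome problem (S = {0,1}^T, mean restriction M), i.e., max_{μ∈M} R(δ_ε, μ) ≤ inf_δ max_{μ∈M} R(δ, μ) + ε, then the coarsened rule δ_ε^C is an ε-approximate minimax regret rule for the problem with outcomes in [0,1]^T and the same mean restriction: max_{s : μ(s)∈M} R(δ_ε^C, s) ≤ inf_δ max_{s : μ(s)∈M} R(δ, s) + ε. -/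
open MeasureTheory

/-- The coarsened rule: apply the binary-sample rule `δb` to independent Bernoulli(`w i`)
coarsenings of the `[0,1]`-valued observations `w`. -/
noncomputable def coarsen {ι : Type*} [Fintype ι] [DecidableEq ι] {T : ℕ}
    (δb : (ι → Bool) → Fin T → ℝ) (w : ι → ℝ) (t : Fin T) : ℝ :=
  ∑ b : ι → Bool, (∏ i, if b i then w i else 1 - w i) * δb b t

/-- Expected probability that the binary-sample rule `δb` assigns treatment `t`, when
observation `i` is Bernoulli with mean `μ (τ i)`. -/
noncomputable def binExp {ι : Type*} [Fintype ι] [DecidableEq ι] {T : ℕ}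
    (τ : ι → Fin T) (δb : (ι → Bool) → Fin T → ℝ) (μ : Fin T → ℝ) (t : Fin T) : ℝ :=
  ∑ b : ι → Bool, (∏ i, if b i then μ (τ i) else 1 - μ (τ i)) * δb b t

/-- Regret of a binary-sample rule at the mean vector `μ` (binary-outcome problem). -/
noncomputable def binRegret {ι : Type*} [Fintype ι] [DecidableEq ι] {T : ℕ}
    (τ : ι → Fin T) (δb : (ι → Bool) → Fin T → ℝ) (μ : Fin T → ℝ) : ℝ :=
  (⨆ t, μ t) - ∑ t, μ t * binExp τ δb μ t

/-- Mean vector of a state. -/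
noncomputable def stateMean {T : ℕ} (s : Fin T → Measure ℝ) (t : Fin T) : ℝ :=
  ∫ x, x ∂ s t

/-- Regret of a rule for `[0,1]`-valued outcomes at state `s`, under fixed assignment `τ`. -/
noncomputable def contRegret {ι : Type*} [Fintype ι] {T : ℕ}
    (τ : ι → Fin T) (δ : (ι → ℝ) → Fin T → ℝ) (s : Fin T → Measure ℝ) : ℝ :=
  (⨆ t, stateMean s t) - ∑ t, stateMean s t * ∫ w, δ w t ∂ (Measure.pi fun i => s (τ i))

/-- A valid (possibly randomized, measurable) rule for the `[0,1]`-outcome problem. -/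
def IsRuleC {ι : Type*} {T : ℕ} (δ : (ι → ℝ) → Fin T → ℝ) : Prop :=
  (∀ t, Measurable fun w => δ w t) ∧ (∀ w t, 0 ≤ δ w t) ∧ ∀ w, ∑ t, δ w t = 1

/-- A valid rule for the binary-outcome problem. -/
def IsRuleB {ι : Type*} {T : ℕ} (δb : (ι → Bool) → Fin T → ℝ) : Prop :=
  (∀ b t, 0 ≤ δb b t) ∧ ∀ b, ∑ t, δb b t = 1

/-- An admissible state: each marginal is a probability distribution on `[0,1]`, with mean
vector in `M`. -/
def IsState {T : ℕ} (M : Set (Fin T → ℝ)) (s : Fin T → Measure ℝ) : Prop :=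
  (∀ t, IsProbabilityMeasure (s t)) ∧ (∀ t, s t (Set.Icc (0:ℝ) 1) = 1) ∧ stateMean s ∈ M

/-
Coarsening turns an observation `w ∈ [0,1]^ι` into independent Bernoulli(`w i`) bits, so
for any state `s` the bits are Bernoulli with the mean vector of `s`: the coarsened rule has
exactly the binary regret of `δb` at `stateMean s`. Hence its worst case over states with means
in `M` is the binary worst case. Conversely, Bernoulli states are admissible states, and on them
any rule acts as its restriction to `{0,1}`-valued samples; so no rule for `[0,1]` outcomes has
a smaller worst-case regret than the best binary rule.
-/

open Finset

noncomputable def bernoulliMeasure (p : ℝ) : Measure Bool :=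
  ENNReal.ofReal p • Measure.dirac true + ENNReal.ofReal (1 - p) • Measure.dirac false

/-- The probability of the bit vector `b` under independent Bernoulli(`p i`) draws. -/
def bernoulliWeight {ι : Type*} [Fintype ι] (p : ι → ℝ) (b : ι → Bool) : ℝ :=
  ∏ i, if b i then p i else 1 - p i

noncomputable def bernoulliState {κ : Type*} (μ : κ → ℝ) (k : κ) : Measure ℝ :=
  (bernoulliMeasure (μ k)).map fun b => if b then 1 else 0

def binaryRestrict {ι : Type*} {T : ℕ} (δ : (ι → ℝ) → Fin T → ℝ) :
    (ι → Bool) → Fin T → ℝ :=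
  fun b => δ fun i => if b i then 1 else 0

section Bernoulli

variable {p : ℝ}

lemma isProbabilityMeasure_bernoulliMeasure (hp : p ∈ Set.Icc (0:ℝ) 1) :
    IsProbabilityMeasure (bernoulliMeasure p) :=
  ⟨by simp [bernoulliMeasure, ← ENNReal.ofReal_add hp.1 (sub_nonneg.2 hp.2)]⟩

lemma bernoulliMeasure_real_singleton (hp : p ∈ Set.Icc (0:ℝ) 1) (b : Bool) :
    (bernoulliMeasure p).real {b} = if b then p else 1 - p := by
  cases b <;> simp [bernoulliMeasure, measureReal_def, hp.1, sub_nonneg.2 hp.2]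

lemma isProbabilityMeasure_bernoulliState {κ : Type*} {μ : κ → ℝ}
    (hμ : ∀ k, μ k ∈ Set.Icc (0:ℝ) 1) (k : κ) : IsProbabilityMeasure (bernoulliState μ k) :=
  have := isProbabilityMeasure_bernoulliMeasure (hμ k)
  Measure.isProbabilityMeasure_map measurable_from_top.aemeasurable

end Bernoulli

section BernoulliWeight

variable {ι : Type*} [Fintype ι]

lemma bernoulliWeight_nonneg {p : ι → ℝ} (hp : ∀ i, p i ∈ Set.Icc (0:ℝ) 1) (b : ι → Bool) :
    0 ≤ bernoulliWeight p b :=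
  prod_nonneg fun i _ => by cases b i <;> simp [(hp i).1, (hp i).2]

lemma sum_bernoulliWeight [DecidableEq ι] (p : ι → ℝ) : ∑ b, bernoulliWeight p b = 1 := by
  simp only [bernoulliWeight]
  rw [← Fintype.prod_sum fun i (x : Bool) => if x then p i else 1 - p i]
  simp

lemma integral_pi_bernoulliMeasure [DecidableEq ι] {p : ι → ℝ}
    (hp : ∀ i, p i ∈ Set.Icc (0:ℝ) 1) (g : (ι → Bool) → ℝ) :
    ∫ b, g b ∂(Measure.pi fun i => bernoulliMeasure (p i)) =
      ∑ b, bernoulliWeight p b * g b := by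
  have := fun i => isProbabilityMeasure_bernoulliMeasure (hp i)
  rw [integral_fintype (Integrable.of_finite)]
  refine sum_congr rfl fun b _ => ?_
  rw [smul_eq_mul, measureReal_def, ← Set.univ_pi_singleton b, Measure.pi_pi,
    ENNReal.toReal_prod]
  simp_rw [← measureReal_def, bernoulliMeasure_real_singleton (hp _), bernoulliWeight]

lemma integral_pi_bernoulliState [DecidableEq ι] {p : ι → ℝ}
    (hp : ∀ i, p i ∈ Set.Icc (0:ℝ) 1) {g : (ι → ℝ) → ℝ} (hg : Measurable g) :
    ∫ w, g w ∂(Measure.pi (bernoulliState p)) =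
      ∑ b, bernoulliWeight p b * g fun i => if b i then 1 else 0 := by
  have := fun i => isProbabilityMeasure_bernoulliMeasure (hp i)
  have := isProbabilityMeasure_bernoulliState hp
  have hmp : MeasurePreserving (fun (b : ι → Bool) i => if b i then (1:ℝ) else 0)
      (Measure.pi fun i => bernoulliMeasure (p i)) (Measure.pi (bernoulliState p)) :=
    measurePreserving_pi _ (bernoulliState p) fun i => ⟨measurable_from_top, rfl⟩
  rw [← hmp.map_eq, integral_map hmp.measurable.aemeasurable hg.aestronglyMeasurable,
    integral_pi_bernoulliMeasure hp]

end BernoulliWeight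

lemma integrable_id_of_measure_Icc_eq_one {ν : Measure ℝ} [IsProbabilityMeasure ν]
    (hν : ν (Set.Icc 0 1) = 1) : Integrable (fun x => x) ν :=
  Integrable.of_bound measurable_id.aestronglyMeasurable 1 <| by
    filter_upwards [(mem_ae_iff_prob_eq_one measurableSet_Icc).2 hν] with x hx
    exact abs_le.2 ⟨by linarith [hx.1], hx.2⟩

section ProductOfStates

variable {ι : Type*} [Fintype ι] {ν : ι → Measure ℝ} [∀ i, IsProbabilityMeasure (ν i)]

lemma integrable_bernoulliWeight (hν : ∀ i, ν i (Set.Icc 0 1) = 1) (b : ι → Bool) :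
    Integrable (fun w => bernoulliWeight w b) (Measure.pi ν) :=
  Integrable.fintype_prod (f := fun i x => if b i then x else 1 - x) fun i => by
    have := integrable_id_of_measure_Icc_eq_one (hν i)
    cases b i
    · exact (integrable_const 1).sub this
    · exact this

lemma integral_bernoulliWeight (hν : ∀ i, ν i (Set.Icc 0 1) = 1) (b : ι → Bool) :
    ∫ w, bernoulliWeight w b ∂(Measure.pi ν) = bernoulliWeight (fun i => ∫ x, x ∂(ν i)) b := by
  refine (integral_fintype_prod_eq_prod (E := fun _ => ℝ)
    (fun i x => if b i then x else 1 - x)).trans (prod_congr rfl fun i _ => ?_)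
  cases b i
  · simp [integral_sub (integrable_const 1) (integrable_id_of_measure_Icc_eq_one (hν i))]
  · rfl

end ProductOfStates

section Regret

variable {ι : Type*} [Fintype ι] [DecidableEq ι] {T : ℕ}

lemma coarsen_eq_sum (δb : (ι → Bool) → Fin T → ℝ) (w : ι → ℝ) (t : Fin T) :
    coarsen δb w t = ∑ b, bernoulliWeight w b * δb b t := rfl

lemma binExp_eq_sum (τ : ι → Fin T) (δb : (ι → Bool) → Fin T → ℝ) (μ : Fin T → ℝ) (t : Fin T) :
    binExp τ δb μ t = ∑ b, bernoulliWeight (fun i => μ (τ i)) b * δb b t := rfl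

lemma integral_coarsen (τ : ι → Fin T) (δb : (ι → Bool) → Fin T → ℝ)
    {s : Fin T → Measure ℝ} [∀ t, IsProbabilityMeasure (s t)]
    (hs : ∀ t, s t (Set.Icc 0 1) = 1) (t : Fin T) :
    ∫ w, coarsen δb w t ∂(Measure.pi fun i => s (τ i)) = binExp τ δb (stateMean s) t := by
  simp_rw [coarsen_eq_sum, binExp_eq_sum]
  rw [integral_finsetSum _ fun b _ =>
    (integrable_bernoulliWeight (fun i => hs (τ i)) b).mul_const _]
  simp_rw [integral_mul_const, integral_bernoulliWeight fun i => hs (τ i)]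
  rfl

lemma contRegret_coarsen (τ : ι → Fin T) (δb : (ι → Bool) → Fin T → ℝ)
    {s : Fin T → Measure ℝ} [∀ t, IsProbabilityMeasure (s t)]
    (hs : ∀ t, s t (Set.Icc 0 1) = 1) :
    contRegret τ (coarsen δb) s = binRegret τ δb (stateMean s) := by
  simp only [contRegret, binRegret, integral_coarsen τ δb hs]

end Regret

section BernoulliState

variable {T : ℕ} {μ : Fin T → ℝ}

lemma stateMean_bernoulliState (hμ : ∀ t, μ t ∈ Set.Icc (0:ℝ) 1) :
    stateMean (bernoulliState μ) = μ := funext fun t => by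
  have := isProbabilityMeasure_bernoulliMeasure (hμ t)
  rw [stateMean, bernoulliState,
    integral_map (f := fun x => x) measurable_from_top.aemeasurable
      measurable_id.aestronglyMeasurable,
    integral_fintype (Integrable.of_finite)]
  simp [bernoulliMeasure_real_singleton (hμ t)]

lemma bernoulliState_Icc (hμ : ∀ t, μ t ∈ Set.Icc (0:ℝ) 1) (t : Fin T) :
    bernoulliState μ t (Set.Icc 0 1) = 1 := by
  have := isProbabilityMeasure_bernoulliMeasure (hμ t)
  have hpre : (fun b : Bool => if b then (1:ℝ) else 0) ⁻¹' Set.Icc 0 1 = Set.univ := by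
    ext b; cases b <;> simp
  rw [bernoulliState, Measure.map_apply measurable_from_top measurableSet_Icc, hpre,
    measure_univ]

lemma isState_bernoulliState {M : Set (Fin T → ℝ)} (hμM : μ ∈ M)
    (hμ : ∀ t, μ t ∈ Set.Icc (0:ℝ) 1) : IsState M (bernoulliState μ) :=
  ⟨isProbabilityMeasure_bernoulliState hμ, bernoulliState_Icc hμ,
    (stateMean_bernoulliState hμ).symm ▸ hμM⟩

lemma contRegret_bernoulliState {ι : Type*} [Fintype ι] [DecidableEq ι] (τ : ι → Fin T)
    {δ : (ι → ℝ) → Fin T → ℝ} (hδ : ∀ t, Measurable fun w => δ w t)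
    (hμ : ∀ t, μ t ∈ Set.Icc (0:ℝ) 1) :
    contRegret τ δ (bernoulliState μ) = binRegret τ (binaryRestrict δ) μ := by
  simp only [contRegret, binRegret, stateMean_bernoulliState hμ, binExp_eq_sum]
  congr! 3 with t
  exact integral_pi_bernoulliState (p := fun i => μ (τ i)) (fun i => hμ (τ i)) (hδ t)

end BernoulliState

lemma sum_mul_le_iSup {κ : Type*} [Fintype κ] (μ : κ → ℝ) {q : κ → ℝ} (hq : ∀ k, 0 ≤ q k)
    (hq1 : ∑ k, q k = 1) : ∑ k, μ k * q k ≤ ⨆ k, μ k :=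
  calc ∑ k, μ k * q k
      ≤ ∑ k, (⨆ k', μ k') * q k := sum_le_sum fun k _ =>
        mul_le_mul_of_nonneg_right (le_ciSup (Set.finite_range μ).bddAbove k) (hq k)
    _ = ⨆ k, μ k := by rw [← mul_sum, hq1, mul_one]

lemma isRuleB_binaryRestrict {ι : Type*} {T : ℕ} {δ : (ι → ℝ) → Fin T → ℝ}
    (hδ : IsRuleC δ) :
    IsRuleB (binaryRestrict δ) :=
  ⟨fun _ => hδ.2.1 _, fun _ => hδ.2.2 _⟩

lemma nonempty_isRuleC {ι : Type*} {T : ℕ} (hT : 0 < T) :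
    Nonempty {δ : (ι → ℝ) → Fin T → ℝ // IsRuleC δ} :=
  ⟨⟨fun _ => Pi.single ⟨0, hT⟩ 1, fun _ => measurable_const,
    fun _ t => by by_cases h : t = ⟨0, hT⟩ <;> simp [h], fun _ => by simp⟩⟩

lemma contRegret_le_one {ι : Type*} [Fintype ι] {T : ℕ} (τ : ι → Fin T)
    {δ : (ι → ℝ) → Fin T → ℝ} (hδ : IsRuleC δ)
    {s : Fin T → Measure ℝ} (hs : ∀ t, stateMean s t ∈ Set.Icc (0:ℝ) 1) :
    contRegret τ δ s ≤ 1 := by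
  have hsup : (⨆ t, stateMean s t) ≤ 1 := Real.iSup_le (fun t => (hs t).2) zero_le_one
  have hsum : 0 ≤ ∑ t, stateMean s t * ∫ w, δ w t ∂(Measure.pi fun i => s (τ i)) :=
    sum_nonneg fun t _ => mul_nonneg (hs t).1 (integral_nonneg fun w => hδ.2.1 w t)
  rw [contRegret]
  linarith

section BinaryRegret

variable {ι : Type*} [Fintype ι] [DecidableEq ι] {T : ℕ}

lemma binExp_nonneg (τ : ι → Fin T) {δb : (ι → Bool) → Fin T → ℝ} (hδb : IsRuleB δb)
    {μ : Fin T → ℝ} (hμ : ∀ t, μ t ∈ Set.Icc (0:ℝ) 1) (t : Fin T) :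
    0 ≤ binExp τ δb μ t :=
  sum_nonneg fun b _ => mul_nonneg (bernoulliWeight_nonneg (fun i => hμ (τ i)) b) (hδb.1 b t)

lemma sum_binExp (τ : ι → Fin T) {δb : (ι → Bool) → Fin T → ℝ} (hδb : IsRuleB δb)
    (μ : Fin T → ℝ) : ∑ t, binExp τ δb μ t = 1 := by
  simp only [binExp_eq_sum]
  rw [sum_comm]
  simp only [← mul_sum, hδb.2, mul_one, sum_bernoulliWeight]

lemma binRegret_nonneg (τ : ι → Fin T) {δb : (ι → Bool) → Fin T → ℝ} (hδb : IsRuleB δb)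
    {μ : Fin T → ℝ} (hμ : ∀ t, μ t ∈ Set.Icc (0:ℝ) 1) : 0 ≤ binRegret τ δb μ :=
  sub_nonneg.2 (sum_mul_le_iSup μ (binExp_nonneg τ hδb hμ) (sum_binExp τ hδb μ))

end BinaryRegret

section Minimax

variable {ι : Type*} [Fintype ι] [DecidableEq ι] {T : ℕ} (τ : ι → Fin T)
  {M : Set (Fin T → ℝ)}

lemma image_contRegret_coarsen (hM : ∀ μ ∈ M, ∀ t, μ t ∈ Set.Icc (0:ℝ) 1)
    (δb : (ι → Bool) → Fin T → ℝ) :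
    (fun s => contRegret τ (coarsen δb) s) '' {s | IsState M s} =
      (fun μ => binRegret τ δb μ) '' M := by
  ext x
  constructor
  · rintro ⟨s, ⟨hprob, hIcc, hsM⟩, rfl⟩
    exact ⟨stateMean s, hsM, (contRegret_coarsen τ δb hIcc).symm⟩
  · rintro ⟨μ, hμM, rfl⟩
    have := isProbabilityMeasure_bernoulliState (hM μ hμM)
    refine ⟨bernoulliState μ, isState_bernoulliState hμM (hM μ hμM), ?_⟩
    simp only [contRegret_coarsen τ δb (bernoulliState_Icc (hM μ hμM)),
      stateMean_bernoulliState (hM μ hμM)]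

lemma image_binRegret_binaryRestrict_subset (hM : ∀ μ ∈ M, ∀ t, μ t ∈ Set.Icc (0:ℝ) 1)
    {δ : (ι → ℝ) → Fin T → ℝ} (hδ : IsRuleC δ) :
    (fun μ => binRegret τ (binaryRestrict δ) μ) '' M ⊆
      (fun s => contRegret τ δ s) '' {s | IsState M s} := by
  rintro x ⟨μ, hμM, rfl⟩
  exact ⟨bernoulliState μ, isState_bernoulliState hμM (hM μ hμM),
    contRegret_bernoulliState τ hδ.1 (hM μ hμM)⟩

lemma iInf_sSup_binRegret_le (hM : ∀ μ ∈ M, ∀ t, μ t ∈ Set.Icc (0:ℝ) 1) (hT : 0 < T)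
    (hMne : M.Nonempty) :
    (⨅ δb : {d : (ι → Bool) → Fin T → ℝ // IsRuleB d},
        sSup ((fun μ => binRegret τ δb.1 μ) '' M)) ≤
      ⨅ δ : {d : (ι → ℝ) → Fin T → ℝ // IsRuleC d},
        sSup ((fun s => contRegret τ δ.1 s) '' {s | IsState M s}) := by
  have := nonempty_isRuleC (ι := ι) hT
  refine le_ciInf fun ⟨δ, hδ⟩ => ?_
  have hbdd : BddBelow (Set.range fun δb : {d : (ι → Bool) → Fin T → ℝ // IsRuleB d} =>
      sSup ((fun μ => binRegret τ δb.1 μ) '' M)) :=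
    ⟨0, Set.forall_mem_range.2 fun ⟨δb, hδb⟩ => Real.sSup_nonneg <|
      Set.forall_mem_image.2 fun μ hμM => binRegret_nonneg τ hδb (hM μ hμM)⟩
  refine ciInf_le_of_le hbdd ⟨binaryRestrict δ, isRuleB_binaryRestrict hδ⟩ <|
    csSup_le_csSup ⟨1, ?_⟩ (hMne.image _) (image_binRegret_binaryRestrict_subset τ hM hδ)
  rintro x ⟨s, hs, rfl⟩
  exact contRegret_le_one τ hδ (hM _ hs.2.2)

end Minimax

theorem stmt17_general {ι : Type*} [Fintype ι] [DecidableEq ι] {T : ℕ} (hT : 0 < T)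
    (τ : ι → Fin T) (M : Set (Fin T → ℝ)) (hMne : M.Nonempty)
    (hM : ∀ μ ∈ M, ∀ t, μ t ∈ Set.Icc (0:ℝ) 1)
    (ε : ℝ)
    (δb : (ι → Bool) → Fin T → ℝ)
    (happrox : sSup ((fun μ => binRegret τ δb μ) '' M) ≤
      (⨅ δb' : {d : (ι → Bool) → Fin T → ℝ // IsRuleB d},
        sSup ((fun μ => binRegret τ δb'.1 μ) '' M)) + ε) :
    sSup ((fun s => contRegret τ (coarsen δb) s) '' {s | IsState M s}) ≤
      (⨅ δ' : {d : (ι → ℝ) → Fin T → ℝ // IsRuleC d},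
        sSup ((fun s => contRegret τ δ'.1 s) '' {s | IsState M s})) + ε := by
  rw [image_contRegret_coarsen τ hM δb]
  linarith [iInf_sSup_binRegret_le τ hM hT hMne]

/-- if `δb` is an `ε`-approximate minimax regret rule for the binary-outcome
problem with mean restriction `M`, then its coarsening is an `ε`-approximate minimax regret
rule for the `[0,1]`-outcome problem with the same mean restriction. -/
theorem stmt17 {ι : Type*} [Fintype ι] [DecidableEq ι] {T : ℕ} (hT : 0 < T)
    (τ : ι → Fin T) (M : Set (Fin T → ℝ)) (hMne : M.Nonempty)
    (hM : ∀ μ ∈ M, ∀ t, μ t ∈ Set.Icc (0:ℝ) 1)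
    (ε : ℝ) (hε : 0 < ε)
    (δb : (ι → Bool) → Fin T → ℝ) (hδb : IsRuleB δb)
    (happrox : sSup ((fun μ => binRegret τ δb μ) '' M) ≤
      (⨅ δb' : {d : (ι → Bool) → Fin T → ℝ // IsRuleB d},
        sSup ((fun μ => binRegret τ δb'.1 μ) '' M)) + ε) :
    sSup ((fun s => contRegret τ (coarsen δb) s) '' {s | IsState M s}) ≤
      (⨅ δ' : {d : (ι → ℝ) → Fin T → ℝ // IsRuleC d},
        sSup ((fun s => contRegret τ δ'.1 s) '' {s | IsState M s})) + ε :=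
  stmt17_general hT τ M hMne hM ε δb happrox
end
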